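/- arXiv:2507.15730 — 2 statements merged into one kernel-verified Lean document; each statement's English description precedes it below -/
import Mathlib

section
/- For every m > 0 there exists a constant γ ≥ 1 depending only on m such that for all u, k > 0, γ⁻¹ (kᵐ + uᵐ)^{1/m − 1} ((uᵐ − kᵐ)₊)² ≤ g₊(uᵐ, kᵐ) ≤ γ (kᵐ + uᵐ)^{1/m − 1} ((uᵐ − kᵐ)₊)², where g₊(uᵐ, kᵐ) := (1/m) ∫_{kᵐ}^{uᵐ} s^{1/m − 1} (s − kᵐ)₊ ds (interpreted as 0 when uᵐ ≤ kᵐ). -/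
open MeasureTheory intervalIntegral

/-- Lemma 2.5 (plus case): two-sided bound for `g₊`. -/
theorem stmt_0 (m : ℝ) (hm : 0 < m) :
    ∃ γ : ℝ, 1 ≤ γ ∧ ∀ u k : ℝ, 0 < u → 0 < k →
      γ⁻¹ * (k ^ m + u ^ m) ^ (1 / m - 1) * (max (u ^ m - k ^ m) 0) ^ 2 ≤
        (1 / m) * ∫ s in (k ^ m)..(u ^ m), s ^ (1 / m - 1) * max (s - k ^ m) 0 ∧
      (1 / m) * (∫ s in (k ^ m)..(u ^ m), s ^ (1 / m - 1) * max (s - k ^ m) 0) ≤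
        γ * (k ^ m + u ^ m) ^ (1 / m - 1) * (max (u ^ m - k ^ m) 0) ^ 2 := by
  set α : ℝ := 1 / m - 1 with hαdef
  have hα1 : α + 1 = 1 / m := by rw [hαdef]; ring
  have hα1pos : 0 < α + 1 := by rw [hα1]; positivity
  have h2pos : (0:ℝ) < (2:ℝ) ^ (-α) := Real.rpow_pos_of_pos two_pos _
  set M₁ : ℝ := max 1 ((2:ℝ) ^ (-α)) with hM₁def
  set M₂ : ℝ := min 1 ((2:ℝ) ^ (-α)) with hM₂def
  have hM₁one : (1:ℝ) ≤ M₁ := le_max_left _ _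
  have hM₂pos : 0 < M₂ := lt_min one_pos h2pos
  set γ : ℝ := max 1 (max (M₁ / m) (8 * m / (3 * M₂))) with hγdef
  have hγ1 : (1:ℝ) ≤ γ := le_max_left _ _
  have hγpos : (0:ℝ) < γ := lt_of_lt_of_le one_pos hγ1
  have hγM₁ : M₁ / m ≤ γ := le_trans (le_max_left _ _) (le_max_right _ _)
  have hγM₂ : 8 * m / (3 * M₂) ≤ γ := le_trans (le_max_right _ _) (le_max_right _ _)
  have hγinv : γ⁻¹ ≤ 3 * M₂ / (8 * m) := by
    have h8 : (0:ℝ) < 8 * m / (3 * M₂) := by positivity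
    calc γ⁻¹ ≤ (8 * m / (3 * M₂))⁻¹ := by
            exact inv_anti₀ h8 hγM₂
      _ = 3 * M₂ / (8 * m) := by rw [inv_div]
  refine ⟨γ, hγ1, ?_⟩
  intro u k hu hk
  set A : ℝ := k ^ m with hAdef
  set B : ℝ := u ^ m with hBdef
  have hA : 0 < A := Real.rpow_pos_of_pos hk m
  have hB : 0 < B := Real.rpow_pos_of_pos hu m
  set X : ℝ := (A + B) ^ α with hXdef
  have hX : 0 < X := Real.rpow_pos_of_pos (by linarith) _
  rcases le_or_gt B A with hBA | hAB
  · -- degenerate case: integral is zero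
    have hmax : max (B - A) 0 = 0 := max_eq_right (by linarith)
    have hint : (∫ s in A..B, s ^ α * max (s - A) 0) = 0 := by
      have heq : Set.EqOn (fun s : ℝ => s ^ α * max (s - A) 0) (fun _ => (0:ℝ))
          (Set.uIcc A B) := by
        intro s hs
        rw [Set.uIcc_of_ge hBA] at hs
        have hsA : s - A ≤ 0 := by linarith [hs.2]
        simp [max_eq_right hsA]
      rw [intervalIntegral.integral_congr heq]
      simp
    rw [hint, hmax]
    norm_num
  · -- main case A < B
    have hmax : max (B - A) 0 = B - A := max_eq_left (by linarith)
    set f : ℝ → ℝ := fun s => s ^ α * max (s - A) 0 with hfdef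
    have hcont : ContinuousOn f (Set.Icc A B) := by
      apply ContinuousOn.mul
      · exact ContinuousOn.rpow_const continuousOn_id
          (fun x hx => Or.inl (ne_of_gt (lt_of_lt_of_le hA hx.1)))
      · exact ((continuous_id.sub continuous_const).max continuous_const).continuousOn
    have hfint : IntervalIntegrable f volume A B := by
      apply ContinuousOn.intervalIntegrable
      rwa [Set.uIcc_of_le hAB.le]
    -- key pointwise identity
    have hkey : ∀ s : ℝ, 0 < s → s ^ α * (s - A) = s ^ (α + 1) * (1 - A / s) := by
      intro s hs
      rw [Real.rpow_add hs α 1, Real.rpow_one]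
      field_simp
    -- comparison B^α ≤ M₁ X and s^α ≥ M₂ X for s ∈ [(A+B)/2, B]
    have hBX : B ^ α ≤ M₁ * X := by
      rcases le_or_gt 0 α with hα0 | hα0
      · have h1 : B ^ α ≤ (A + B) ^ α :=
          Real.rpow_le_rpow hB.le (by linarith) hα0
        calc B ^ α ≤ X := h1
          _ = 1 * X := (one_mul X).symm
          _ ≤ M₁ * X := mul_le_mul_of_nonneg_right hM₁one hX.le
      · have h1 : (2 * B) ^ α ≤ (A + B) ^ α :=
          Real.rpow_le_rpow_of_nonpos (by linarith) (by linarith) hα0.le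
        have h2 : (2 * B) ^ α = 2 ^ α * B ^ α := Real.mul_rpow (by norm_num) hB.le
        have h3 : (2:ℝ) ^ (-α) * 2 ^ α = 1 := by
          rw [← Real.rpow_add two_pos]; simp
        have h4 : B ^ α = 2 ^ (-α) * (2 * B) ^ α := by
          rw [h2, ← mul_assoc, h3, one_mul]
        calc B ^ α = 2 ^ (-α) * (2 * B) ^ α := h4
          _ ≤ 2 ^ (-α) * (A + B) ^ α := mul_le_mul_of_nonneg_left h1 h2pos.le
          _ ≤ M₁ * X := mul_le_mul_of_nonneg_right (le_max_right _ _) hX.le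
    -- upper bound
    have hup : ∀ s ∈ Set.Icc A B, f s ≤ M₁ * X * (B - A) := by
      intro s hs
      have hs0 : 0 < s := lt_of_lt_of_le hA hs.1
      have hmaxs : max (s - A) 0 = s - A := max_eq_left (by linarith [hs.1])
      have hstep1 : s ^ α * (s - A) ≤ B ^ α * (B - A) := by
        rw [hkey s hs0, hkey B hB]
        apply mul_le_mul
        · exact Real.rpow_le_rpow hs0.le hs.2 hα1pos.le
        · have : A / B ≤ A / s := div_le_div_of_nonneg_left hA.le hs0 hs.2
          linarith
        · have : A / s ≤ 1 := (div_le_one hs0).mpr hs.1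
          linarith
        · exact Real.rpow_nonneg hB.le _
      have hstep2 : B ^ α * (B - A) ≤ M₁ * X * (B - A) :=
        mul_le_mul_of_nonneg_right hBX (by linarith)
      calc f s = s ^ α * (s - A) := by rw [hfdef]; simp [hmaxs]
        _ ≤ B ^ α * (B - A) := hstep1
        _ ≤ M₁ * X * (B - A) := hstep2
    have hIu : (∫ s in A..B, f s) ≤ M₁ * X * (B - A) ^ 2 := by
      calc (∫ s in A..B, f s) ≤ ∫ _ in A..B, M₁ * X * (B - A) :=
            intervalIntegral.integral_mono_on hAB.le hfint intervalIntegrable_const hup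
        _ = (B - A) * (M₁ * X * (B - A)) := by
            rw [intervalIntegral.integral_const, smul_eq_mul]
        _ = M₁ * X * (B - A) ^ 2 := by ring
    -- lower bound
    set c : ℝ := (A + B) / 2 with hcdef
    have hAc : A ≤ c := by rw [hcdef]; linarith
    have hcB : c ≤ B := by rw [hcdef]; linarith
    have hc0 : 0 < c := lt_of_lt_of_le hA hAc
    have hfint1 : IntervalIntegrable f volume A c := by
      apply ContinuousOn.intervalIntegrable
      apply hcont.mono
      rw [Set.uIcc_of_le hAc]
      exact Set.Icc_subset_Icc le_rfl hcB
    have hfint2 : IntervalIntegrable f volume c B := by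
      apply ContinuousOn.intervalIntegrable
      apply hcont.mono
      rw [Set.uIcc_of_le hcB]
      exact Set.Icc_subset_Icc hAc le_rfl
    have hsplit : (∫ s in A..c, f s) + (∫ s in c..B, f s) = ∫ s in A..B, f s :=
      intervalIntegral.integral_add_adjacent_intervals hfint1 hfint2
    have h0 : 0 ≤ ∫ s in A..c, f s := by
      apply intervalIntegral.integral_nonneg hAc
      intro s hs
      exact mul_nonneg (Real.rpow_nonneg (le_trans hA.le hs.1) _) (le_max_right _ _)
    have hlowpt : ∀ s ∈ Set.Icc c B, M₂ * X * (s - A) ≤ f s := by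
      intro s hs
      have hs0 : 0 < s := lt_of_lt_of_le hc0 hs.1
      have hsA : A ≤ s := le_trans hAc hs.1
      have hmaxs : max (s - A) 0 = s - A := max_eq_left (by linarith)
      have hMX : M₂ * X ≤ s ^ α := by
        rcases le_or_gt 0 α with hα0 | hα0
        · have h1 : c ^ α ≤ s ^ α := Real.rpow_le_rpow hc0.le hs.1 hα0
          have h2 : c ^ α = 2 ^ (-α) * X := by
            rw [hcdef, Real.div_rpow (by linarith) (by norm_num),
              Real.rpow_neg (by norm_num)]
            rw [hXdef]
            ring
          calc M₂ * X ≤ 2 ^ (-α) * X :=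
                mul_le_mul_of_nonneg_right (min_le_right _ _) hX.le
            _ = c ^ α := h2.symm
            _ ≤ s ^ α := h1
        · have h1 : (A + B) ^ α ≤ s ^ α :=
            Real.rpow_le_rpow_of_nonpos hs0 (by linarith [hs.2]) hα0.le
          calc M₂ * X ≤ 1 * X := mul_le_mul_of_nonneg_right (min_le_left _ _) hX.le
            _ = X := one_mul X
            _ ≤ s ^ α := h1
      calc M₂ * X * (s - A) ≤ s ^ α * (s - A) :=
            mul_le_mul_of_nonneg_right hMX (by linarith)
        _ = f s := by rw [hfdef]; simp [hmaxs]
    have hglin : (∫ s in c..B, M₂ * X * (s - A)) = M₂ * X * (3 / 8) * (B - A) ^ 2 := by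
      rw [intervalIntegral.integral_const_mul,
        intervalIntegral.integral_sub intervalIntegrable_id intervalIntegrable_const,
        integral_id, intervalIntegral.integral_const, smul_eq_mul, hcdef]
      ring
    have hIl : M₂ * X * (3 / 8) * (B - A) ^ 2 ≤ ∫ s in A..B, f s := by
      have hgint : IntervalIntegrable (fun s => M₂ * X * (s - A)) volume c B := by
        apply Continuous.intervalIntegrable
        exact continuous_const.mul (continuous_id.sub continuous_const)
      have h1 : (∫ s in c..B, M₂ * X * (s - A)) ≤ ∫ s in c..B, f s :=
        intervalIntegral.integral_mono_on hcB hgint hfint2 hlowpt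
      rw [hglin] at h1
      linarith
    -- conclude
    rw [hmax]
    constructor
    · have h1 : (1 / m) * (M₂ * X * (3 / 8) * (B - A) ^ 2) ≤
          (1 / m) * ∫ s in A..B, f s :=
        mul_le_mul_of_nonneg_left hIl (by positivity)
      have h2 : γ⁻¹ * X * (B - A) ^ 2 ≤ (3 * M₂ / (8 * m)) * (X * (B - A) ^ 2) := by
        have := mul_le_mul_of_nonneg_right hγinv
          (show (0:ℝ) ≤ X * (B - A) ^ 2 by positivity)
        calc γ⁻¹ * X * (B - A) ^ 2 = γ⁻¹ * (X * (B - A) ^ 2) := by ring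
          _ ≤ (3 * M₂ / (8 * m)) * (X * (B - A) ^ 2) := this
      have h3 : (3 * M₂ / (8 * m)) * (X * (B - A) ^ 2) =
          (1 / m) * (M₂ * X * (3 / 8) * (B - A) ^ 2) := by
        field_simp
      linarith
    · have h1 : (1 / m) * (∫ s in A..B, f s) ≤ (1 / m) * (M₁ * X * (B - A) ^ 2) :=
        mul_le_mul_of_nonneg_left hIu (by positivity)
      have h2 : (M₁ / m) * (X * (B - A) ^ 2) ≤ γ * (X * (B - A) ^ 2) :=
        mul_le_mul_of_nonneg_right hγM₁ (by positivity)
      have h3 : (1 / m) * (M₁ * X * (B - A) ^ 2) = (M₁ / m) * (X * (B - A) ^ 2) := by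
        ring
      calc (1 / m) * (∫ s in A..B, f s) ≤ (M₁ / m) * (X * (B - A) ^ 2) := by
            rw [← h3]; exact h1
        _ ≤ γ * (X * (B - A) ^ 2) := h2
        _ = γ * X * (B - A) ^ 2 := by ring
end

section
/- For every m > 0 there exists a constant γ ≥ 1 depending only on m such that for all u, k > 0 with u ≤ k, γ⁻¹ (kᵐ + uᵐ)^{1/m − 1} (kᵐ − uᵐ)² ≤ g₋(uᵐ, kᵐ) ≤ γ (kᵐ + uᵐ)^{1/m − 1} (kᵐ − uᵐ)², where g₋(uᵐ, kᵐ) := (1/m) ∫_{uᵐ}^{kᵐ} s^{1/m − 1} (kᵐ − s) ds. -/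
open MeasureTheory intervalIntegral

private lemma aux_int {p b : ℝ} {a c : ℝ} (ha : 0 < a) (hc : 0 < c) :
    IntervalIntegrable (fun s => s ^ (p - 1) * (b - s)) volume a c := by
  apply ContinuousOn.intervalIntegrable
  apply ContinuousOn.mul
  · intro s hs
    have hs0 : s ≠ 0 := by
      have : 0 < min a c := lt_min ha hc
      have := hs.1
      simp only [Set.uIcc, Set.mem_Icc] at hs
      nlinarith [hs.1]
    exact (Real.continuousAt_rpow_const s _ (Or.inl hs0)).continuousWithinAt
  · exact (continuous_const.sub continuous_id).continuousOn

private lemma aux_lin (c b : ℝ) : (∫ s in c..b, (b - s)) = (b - c) ^ 2 / 2 := by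
  have h := intervalIntegral.integral_comp_sub_left (a := c) (b := b) (fun x : ℝ => x) b
  rw [h, integral_id]
  ring

private lemma lower_bd {p : ℝ} (hp : 0 < p) {a b : ℝ} (ha : 0 < a) (hab : a ≤ b) :
    min 1 ((2:ℝ) ^ (1 - p)) / 8 * ((b + a) ^ (p - 1) * (b - a) ^ 2) ≤
      ∫ s in a..b, s ^ (p - 1) * (b - s) := by
  set c₁ := min 1 ((2:ℝ) ^ (1 - p)) with hc₁
  have hc₁pos : 0 < c₁ := lt_min one_pos (Real.rpow_pos_of_pos two_pos _)
  set M := (a + b) / 2 with hM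
  have hb : 0 < b := ha.trans_le hab
  have hM1 : a ≤ M := by rw [hM]; linarith
  have hM2 : M ≤ b := by rw [hM]; linarith
  have hMpos : 0 < M := by rw [hM]; linarith
  have habp : 0 < a + b := by linarith
  have key : ∀ s ∈ Set.Icc M b,
      c₁ * (a + b) ^ (p - 1) * (b - s) ≤ s ^ (p - 1) * (b - s) := by
    intro s hs
    have hs0 : 0 < s := hMpos.trans_le hs.1
    have hbs : 0 ≤ b - s := by linarith [hs.2]
    have h1 : c₁ * (a + b) ^ (p - 1) ≤ s ^ (p - 1) := by
      rcases le_or_gt 1 p with hp1 | hp1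
      · have hstep : ((a + b) / 2) ^ (p - 1) ≤ s ^ (p - 1) :=
          Real.rpow_le_rpow (by positivity) (by rw [← hM]; exact hs.1) (by linarith)
        calc c₁ * (a + b) ^ (p - 1) ≤ 2 ^ (1 - p) * (a + b) ^ (p - 1) :=
              mul_le_mul_of_nonneg_right (min_le_right _ _) (Real.rpow_nonneg habp.le _)
          _ = ((a + b) / 2) ^ (p - 1) := by
              rw [Real.div_rpow habp.le (by norm_num : (0:ℝ) ≤ 2),
                show (1 - p) = -(p - 1) by ring,
                Real.rpow_neg (by norm_num : (0:ℝ) ≤ 2)]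
              ring
          _ ≤ s ^ (p - 1) := hstep
      · have hstep : (a + b) ^ (p - 1) ≤ s ^ (p - 1) :=
          Real.rpow_le_rpow_of_nonpos hs0 (by linarith [hs.2]) (by linarith)
        calc c₁ * (a + b) ^ (p - 1) ≤ 1 * (a + b) ^ (p - 1) :=
              mul_le_mul_of_nonneg_right (min_le_left _ _) (Real.rpow_nonneg habp.le _)
          _ = (a + b) ^ (p - 1) := one_mul _
          _ ≤ s ^ (p - 1) := hstep
    exact mul_le_mul_of_nonneg_right h1 hbs
  have step1 : (∫ s in M..b, (c₁ * (a + b) ^ (p - 1)) * (b - s)) ≤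
      ∫ s in M..b, s ^ (p - 1) * (b - s) := by
    apply intervalIntegral.integral_mono_on hM2
      ((continuous_const.mul (continuous_const.sub continuous_id)).intervalIntegrable _ _)
      (aux_int hMpos hb)
    intro s hs
    exact key s hs
  have step2 : (∫ s in M..b, s ^ (p - 1) * (b - s)) ≤
      ∫ s in a..b, s ^ (p - 1) * (b - s) := by
    apply intervalIntegral.integral_mono_interval hM1 hM2 le_rfl _ (aux_int ha hb)
    rw [Filter.EventuallyLE, ae_restrict_iff' measurableSet_Ioc]
    filter_upwards with s
    intro hs
    have : 0 < s := ha.trans hs.1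
    have : 0 ≤ s ^ (p - 1) := Real.rpow_nonneg this.le _
    have : 0 ≤ b - s := by linarith [hs.2]
    simp only [Pi.zero_apply]
    positivity
  have hval : (∫ s in M..b, (c₁ * (a + b) ^ (p - 1)) * (b - s)) =
      c₁ * (a + b) ^ (p - 1) * ((b - M) ^ 2 / 2) := by
    rw [intervalIntegral.integral_const_mul, aux_lin]
  have hM3 : (b - M) ^ 2 / 2 = (b - a) ^ 2 / 8 := by rw [hM]; ring
  have : c₁ / 8 * ((b + a) ^ (p - 1) * (b - a) ^ 2) =
      c₁ * (a + b) ^ (p - 1) * ((b - M) ^ 2 / 2) := by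
    rw [hM3, add_comm b a]; ring
  rw [this, ← hval]
  exact step1.trans step2

private lemma upper_bd {p : ℝ} (hp : 0 < p) {a b : ℝ} (ha : 0 < a) (hab : a ≤ b) :
    (∫ s in a..b, s ^ (p - 1) * (b - s)) ≤
      max 1 (max ((3:ℝ) ^ (1 - p)) ((2:ℝ) ^ (3 - p) / p)) *
        ((b + a) ^ (p - 1) * (b - a) ^ 2) := by
  set C := max 1 (max ((3:ℝ) ^ (1 - p)) ((2:ℝ) ^ (3 - p) / p)) with hC
  have hb : 0 < b := ha.trans_le hab
  have habp : 0 < a + b := by linarith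
  have hX : 0 ≤ (b + a) ^ (p - 1) * (b - a) ^ 2 := by positivity
  have hC1 : (1:ℝ) ≤ C := le_max_left _ _
  rcases le_or_gt 1 p with hp1 | hp1
  · -- p ≥ 1 : pointwise bound s^(p-1) ≤ (a+b)^(p-1)
    have key : ∀ s ∈ Set.Icc a b,
        s ^ (p - 1) * (b - s) ≤ ((a + b) ^ (p - 1)) * (b - s) := by
      intro s hs
      have hbs : 0 ≤ b - s := by linarith [hs.2]
      refine mul_le_mul_of_nonneg_right ?_ hbs
      exact Real.rpow_le_rpow (by linarith [hs.1]) (by linarith [hs.2]) (by linarith)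
    have step : (∫ s in a..b, s ^ (p - 1) * (b - s)) ≤
        ∫ s in a..b, ((a + b) ^ (p - 1)) * (b - s) := by
      apply intervalIntegral.integral_mono_on hab (aux_int ha hb)
        ((continuous_const.mul (continuous_const.sub continuous_id)).intervalIntegrable _ _) key
    rw [intervalIntegral.integral_const_mul, aux_lin] at step
    refine step.trans ?_
    have h2 : (a + b) ^ (p - 1) * ((b - a) ^ 2 / 2) ≤
        1 * ((b + a) ^ (p - 1) * (b - a) ^ 2) := by
      rw [add_comm a b]
      nlinarith [Real.rpow_nonneg (show (0:ℝ) ≤ b + a by linarith) (p - 1), sq_nonneg (b - a)]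
    exact h2.trans (mul_le_mul_of_nonneg_right hC1 hX)
  · rcases le_or_gt b (2 * a) with hba | hba
    · -- p < 1, b ≤ 2a
      have key : ∀ s ∈ Set.Icc a b,
          s ^ (p - 1) * (b - s) ≤ ((3:ℝ) ^ (1 - p) * (a + b) ^ (p - 1)) * (b - s) := by
        intro s hs
        have hs0 : 0 < s := ha.trans_le hs.1
        have hbs : 0 ≤ b - s := by linarith [hs.2]
        refine mul_le_mul_of_nonneg_right ?_ hbs
        have h1 : s ^ (p - 1) ≤ a ^ (p - 1) :=
          Real.rpow_le_rpow_of_nonpos ha hs.1 (by linarith)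
        have h2 : a ^ (p - 1) ≤ ((a + b) / 3) ^ (p - 1) :=
          Real.rpow_le_rpow_of_nonpos (by positivity) (by linarith) (by linarith)
        have h3 : ((a + b) / 3) ^ (p - 1) = (3:ℝ) ^ (1 - p) * (a + b) ^ (p - 1) := by
          rw [Real.div_rpow habp.le (by norm_num : (0:ℝ) ≤ 3),
            show (1 - p) = -(p - 1) by ring,
            Real.rpow_neg (by norm_num : (0:ℝ) ≤ 3)]
          ring
        calc s ^ (p - 1) ≤ a ^ (p - 1) := h1
          _ ≤ ((a + b) / 3) ^ (p - 1) := h2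
          _ = _ := h3
      have step : (∫ s in a..b, s ^ (p - 1) * (b - s)) ≤
          ∫ s in a..b, ((3:ℝ) ^ (1 - p) * (a + b) ^ (p - 1)) * (b - s) := by
        apply intervalIntegral.integral_mono_on hab (aux_int ha hb)
          ((continuous_const.mul (continuous_const.sub continuous_id)).intervalIntegrable _ _) key
      rw [intervalIntegral.integral_const_mul, aux_lin] at step
      refine step.trans ?_
      have h3C : (3:ℝ) ^ (1 - p) ≤ C := le_trans (le_max_left _ _) (le_max_right _ _)
      have h3pos : (0:ℝ) < 3 ^ (1 - p) := Real.rpow_pos_of_pos (by norm_num) _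
      calc (3:ℝ) ^ (1 - p) * (a + b) ^ (p - 1) * ((b - a) ^ 2 / 2) ≤
            (3:ℝ) ^ (1 - p) * ((b + a) ^ (p - 1) * (b - a) ^ 2) := by
            rw [add_comm a b]
            nlinarith [Real.rpow_nonneg (show (0:ℝ) ≤ b + a by linarith) (p - 1), sq_nonneg (b - a)]
        _ ≤ C * ((b + a) ^ (p - 1) * (b - a) ^ 2) := mul_le_mul_of_nonneg_right h3C hX
    · -- p < 1, b > 2a
      have key : ∀ s ∈ Set.Icc a b,
          s ^ (p - 1) * (b - s) ≤ b * s ^ (p - 1) := by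
        intro s hs
        have hs0 : 0 < s := ha.trans_le hs.1
        have hsp : 0 ≤ s ^ (p - 1) := Real.rpow_nonneg hs0.le _
        have : b - s ≤ b := by linarith [hs.1]
        nlinarith
      have hint2 : IntervalIntegrable (fun s => b * s ^ (p - 1)) volume a b := by
        apply ContinuousOn.intervalIntegrable
        apply ContinuousOn.mul continuousOn_const
        intro s hs
        have hs0 : s ≠ 0 := by
          simp only [Set.uIcc, Set.mem_Icc] at hs
          have : 0 < min a b := lt_min ha hb
          nlinarith [hs.1]
        exact (Real.continuousAt_rpow_const s _ (Or.inl hs0)).continuousWithinAt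
      have step : (∫ s in a..b, s ^ (p - 1) * (b - s)) ≤
          ∫ s in a..b, b * s ^ (p - 1) := by
        apply intervalIntegral.integral_mono_on hab (aux_int ha hb) hint2 key
      have hval : (∫ s in a..b, b * s ^ (p - 1)) = b * ((b ^ p - a ^ p) / p) := by
        rw [intervalIntegral.integral_const_mul, integral_rpow (Or.inl (by linarith))]
        norm_num
      rw [hval] at step
      have hap : 0 < a ^ p := Real.rpow_pos_of_pos ha _
      have hbp : 0 < b ^ p := Real.rpow_pos_of_pos hb _
      have step2 : b * ((b ^ p - a ^ p) / p) ≤ b ^ (p + 1) / p := by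
        have hbb : b * b ^ p = b ^ (p + 1) := by
          rw [Real.rpow_add hb, Real.rpow_one]; ring
        have hnum : b * (b ^ p - a ^ p) ≤ b ^ (p + 1) := by nlinarith
        calc b * ((b ^ p - a ^ p) / p) = (b * (b ^ p - a ^ p)) / p := by ring
          _ ≤ b ^ (p + 1) / p := by gcongr
      refine step.trans (step2.trans ?_)
      -- now show b ^ (p+1) / p ≤ C * ((b+a)^(p-1) * (b-a)^2)
      have h24 : (2:ℝ) ^ (3 - p) * 2 ^ (p - 1) = 4 := by
        rw [← Real.rpow_add two_pos, show (3 - p + (p - 1)) = ((2:ℕ):ℝ) by push_cast; ring,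
          Real.rpow_natCast]
        norm_num
      have hb2 : b ^ (p - 1) * b ^ 2 = b ^ (p + 1) := by
        rw [show (b:ℝ) ^ 2 = b ^ ((2:ℕ):ℝ) from (Real.rpow_natCast b 2).symm,
          ← Real.rpow_add hb]
        congr 1
        push_cast
        ring
      have h1 : (2:ℝ) ^ (p - 1) * b ^ (p - 1) ≤ (b + a) ^ (p - 1) := by
        have : (b + a) ^ (p - 1) ≥ (2 * b) ^ (p - 1) :=
          Real.rpow_le_rpow_of_nonpos (by linarith : (0:ℝ) < b + a) (by linarith) (by linarith)
        rwa [Real.mul_rpow (by norm_num) hb.le] at this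
      have h2 : (b / 2) ^ 2 ≤ (b - a) ^ 2 := by nlinarith
      have hCge : (2:ℝ) ^ (3 - p) / p ≤ C := le_trans (le_max_right _ _) (le_max_right _ _)
      have h2pos : (0:ℝ) < 2 ^ (3 - p) / p := by
        exact div_pos (Real.rpow_pos_of_pos two_pos _) hp
      calc b ^ (p + 1) / p
          = (2 ^ (3 - p) / p) * ((2:ℝ) ^ (p - 1) * b ^ (p - 1)) * ((b / 2) ^ 2) := by
            have : (2 ^ (3 - p) / p) * ((2:ℝ) ^ (p - 1) * b ^ (p - 1)) * ((b / 2) ^ 2) =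
                ((2:ℝ) ^ (3 - p) * 2 ^ (p - 1)) * (b ^ (p - 1) * b ^ 2) / (4 * p) := by
              ring
            rw [this, h24, hb2]
            field_simp
        _ ≤ (2 ^ (3 - p) / p) * ((b + a) ^ (p - 1)) * ((b - a) ^ 2) := by
            apply mul_le_mul _ h2 (by positivity) (by positivity)
            exact mul_le_mul_of_nonneg_left h1 h2pos.le
        _ ≤ C * ((b + a) ^ (p - 1) * (b - a) ^ 2) := by
            rw [← mul_assoc]
            exact mul_le_mul_of_nonneg_right
              (mul_le_mul_of_nonneg_right hCge (by positivity : (0:ℝ) ≤ (b + a) ^ (p - 1))) (sq_nonneg _)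

/-- Lemma 2.5 (minus case): two-sided bound for `g₋`. -/
theorem stmt_1 (m : ℝ) (hm : 0 < m) :
    ∃ γ : ℝ, 1 ≤ γ ∧ ∀ u k : ℝ, 0 < u → 0 < k → u ≤ k →
      γ⁻¹ * (k ^ m + u ^ m) ^ (1 / m - 1) * (k ^ m - u ^ m) ^ 2 ≤
        (1 / m) * ∫ s in (u ^ m)..(k ^ m), s ^ (1 / m - 1) * (k ^ m - s) ∧
      (1 / m) * (∫ s in (u ^ m)..(k ^ m), s ^ (1 / m - 1) * (k ^ m - s)) ≤
        γ * (k ^ m + u ^ m) ^ (1 / m - 1) * (k ^ m - u ^ m) ^ 2 := by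
  set p := 1 / m with hpdef
  have hp : 0 < p := by positivity
  set c := min 1 ((2:ℝ) ^ (1 - p)) / 8 with hcdef
  have hc : 0 < c := by
    have : 0 < min 1 ((2:ℝ) ^ (1 - p)) := lt_min one_pos (Real.rpow_pos_of_pos two_pos _)
    positivity
  set Cu := max 1 (max ((3:ℝ) ^ (1 - p)) ((2:ℝ) ^ (3 - p) / p)) with hCudef
  have hCu : 0 < Cu := lt_of_lt_of_le one_pos (le_max_left _ _)
  refine ⟨max 1 (max (m / c) (Cu / m)), le_max_left _ _, ?_⟩
  set γ := max 1 (max (m / c) (Cu / m)) with hγdef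
  have hγ : 0 < γ := lt_of_lt_of_le one_pos (le_max_left _ _)
  intro u k hu hk huk
  have ha : 0 < u ^ m := Real.rpow_pos_of_pos hu m
  have hab : u ^ m ≤ k ^ m := Real.rpow_le_rpow hu.le huk hm.le
  set a := u ^ m
  set b := k ^ m
  have hX : 0 ≤ (b + a) ^ (p - 1) * (b - a) ^ 2 := by
    have : 0 < b + a := by linarith
    positivity
  have hlow := lower_bd hp ha hab
  have hupp := upper_bd hp ha hab
  constructor
  · -- lower bound
    have hγ1 : γ⁻¹ ≤ c / m := by
      have h1 : m / c ≤ γ := le_trans (le_max_left _ _) (le_max_right _ _)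
      have h2 : γ⁻¹ ≤ (m / c)⁻¹ := by
        apply inv_anti₀ (by positivity) h1
      rwa [inv_div] at h2
    calc γ⁻¹ * (b + a) ^ (p - 1) * (b - a) ^ 2
        ≤ (c / m) * ((b + a) ^ (p - 1) * (b - a) ^ 2) := by
          rw [mul_assoc]
          exact mul_le_mul_of_nonneg_right hγ1 hX
      _ = (1 / m) * (c * ((b + a) ^ (p - 1) * (b - a) ^ 2)) := by ring
      _ ≤ (1 / m) * ∫ s in a..b, s ^ (p - 1) * (b - s) := by
          exact mul_le_mul_of_nonneg_left hlow (by positivity)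
  · -- upper bound
    have hγ2 : Cu / m ≤ γ := le_trans (le_max_right _ _) (le_max_right _ _)
    calc (1 / m) * (∫ s in a..b, s ^ (p - 1) * (b - s))
        ≤ (1 / m) * (Cu * ((b + a) ^ (p - 1) * (b - a) ^ 2)) :=
          mul_le_mul_of_nonneg_left hupp (by positivity)
      _ = (Cu / m) * ((b + a) ^ (p - 1) * (b - a) ^ 2) := by ring
      _ ≤ γ * ((b + a) ^ (p - 1) * (b - a) ^ 2) := mul_le_mul_of_nonneg_right hγ2 hX
      _ = γ * (b + a) ^ (p - 1) * (b - a) ^ 2 := by ring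
end
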